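/- Let d ≥ 1 and let μ be a probability measure on ℝ^d whose support K is compact. Then for every x ∈ ℝ^d, lim_{σ → 0⁺} dist²_μ(x, σ) = dist_K(x)², where dist_K(x) := inf_{y ∈ K} ‖x - y‖; that is, the smoothed squared-distance converges pointwise to the squared distance to the support of μ as the smoothing parameter tends to zero. -/

import Mathlib

open MeasureTheory Real Set Filter

/-- The topological support of a measure. -/
def mSupport {α : Type*} [TopologicalSpace α] [MeasurableSpace α]
    (μ : Measure α) : Set α :=
  {x | ∀ U ∈ nhds x, 0 < μ U}

/-- The smoothed squared-distance
`dist²_μ(x, σ) = -2σ² log(∫ exp(-‖y - x‖²/(2σ²)) dμ(y))`. -/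
noncomputable def smDist2 {d : ℕ} (μ : Measure (EuclideanSpace ℝ (Fin d)))
    (x : EuclideanSpace ℝ (Fin d)) (σ : ℝ) : ℝ :=
  -2 * σ ^ 2 * Real.log (∫ y, Real.exp (-‖y - x‖ ^ 2 / (2 * σ ^ 2)) ∂μ)

/-- For a probability measure `μ` on `ℝ^d` with compact support `K`, the smoothed
squared-distance converges pointwise, as `σ → 0⁺`, to the squared distance to `K`:
`lim_{σ → 0⁺} dist²_μ(x, σ) = dist_K(x)²` where `dist_K(x) = inf_{y ∈ K} ‖x - y‖`. -/
theorem stmt11 {d : ℕ} (hd : 1 ≤ d) (μ : Measure (EuclideanSpace ℝ (Fin d)))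
    [IsProbabilityMeasure μ] (hK : IsCompact (mSupport μ)) :
    ∀ x : EuclideanSpace ℝ (Fin d),
      Tendsto (fun σ => smDist2 μ x σ) (nhdsWithin 0 (Ioi (0 : ℝ)))
        (nhds ((Metric.infDist x (mSupport μ)) ^ 2)) := by
  intro x
  set K := mSupport μ with hKdef
  -- μ vanishes outside K
  have hKc : μ Kᶜ = 0 := by
    apply measure_null_of_locally_null
    intro z hz
    simp only [hKdef, mSupport, mem_compl_iff, mem_setOf_eq, not_forall] at hz
    obtain ⟨U, hU, hU0⟩ := hz
    exact ⟨U, nhdsWithin_le_nhds hU, by simpa using hU0⟩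
  have hKne : K.Nonempty := by
    by_contra h
    rw [not_nonempty_iff_eq_empty] at h
    have : μ Set.univ = 0 := by rw [← compl_empty, ← h]; exact hKc
    simp [measure_univ] at this
  set D := Metric.infDist x K with hD
  have hD0 : 0 ≤ D := Metric.infDist_nonneg
  -- integrability and positivity facts for σ > 0
  have hmeas : ∀ σ : ℝ, Continuous (fun y : EuclideanSpace ℝ (Fin d) =>
      Real.exp (-‖y - x‖ ^ 2 / (2 * σ ^ 2))) := by
    intro σ; fun_prop
  have hint : ∀ σ : ℝ, Integrable (fun y => Real.exp (-‖y - x‖ ^ 2 / (2 * σ ^ 2))) μ := by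
    intro σ
    refine (integrable_const (1:ℝ)).mono' ((hmeas σ).aestronglyMeasurable) ?_
    filter_upwards with y
    rw [Real.norm_eq_abs, abs_of_pos (Real.exp_pos _)]
    apply Real.exp_le_one_iff.2
    apply div_nonpos_of_nonpos_of_nonneg
    · simp [sq_nonneg]
    · positivity
  have hIpos : ∀ σ : ℝ, 0 < ∫ y, Real.exp (-‖y - x‖ ^ 2 / (2 * σ ^ 2)) ∂μ := by
    intro σ
    rw [integral_pos_iff_support_of_nonneg (fun y => (Real.exp_pos _).le) (hint σ)]
    have : (Function.support fun y => Real.exp (-‖y - x‖ ^ 2 / (2 * σ ^ 2))) = Set.univ := by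
      ext y; simp [Function.mem_support, (Real.exp_pos _).ne']
    rw [this, measure_univ]; norm_num
  rw [tendsto_order]
  constructor
  · -- lower bound: D² ≤ smDist2 always (σ > 0)
    intro a ha
    filter_upwards [self_mem_nhdsWithin] with σ hσ
    have hσ0 : (0:ℝ) < σ := hσ
    refine lt_of_lt_of_le ha ?_
    -- integrand ≤ exp(-D²/(2σ²)) a.e.
    have hub : ∫ y, Real.exp (-‖y - x‖ ^ 2 / (2 * σ ^ 2)) ∂μ ≤
        Real.exp (-D ^ 2 / (2 * σ ^ 2)) := by
      have : ∀ᵐ y ∂μ, Real.exp (-‖y - x‖ ^ 2 / (2 * σ ^ 2)) ≤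
          Real.exp (-D ^ 2 / (2 * σ ^ 2)) := by
        have hae : ∀ᵐ y ∂μ, y ∈ K := by
          rw [ae_iff]; exact hKc
        filter_upwards [hae] with y hy
        apply Real.exp_le_exp.2
        apply div_le_div_of_nonneg_right ?_ (by positivity)
        have h1 : D ≤ ‖y - x‖ := by
          rw [show ‖y - x‖ = dist x y by rw [dist_comm, dist_eq_norm]]
          exact Metric.infDist_le_dist_of_mem hy
        nlinarith
      calc ∫ y, Real.exp (-‖y - x‖ ^ 2 / (2 * σ ^ 2)) ∂μ
          ≤ ∫ _y, Real.exp (-D ^ 2 / (2 * σ ^ 2)) ∂μ :=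
            integral_mono_ae (hint σ) (integrable_const _) this
        _ = Real.exp (-D ^ 2 / (2 * σ ^ 2)) := by simp
    have hlog : Real.log (∫ y, Real.exp (-‖y - x‖ ^ 2 / (2 * σ ^ 2)) ∂μ) ≤
        -D ^ 2 / (2 * σ ^ 2) := by
      calc Real.log (∫ y, Real.exp (-‖y - x‖ ^ 2 / (2 * σ ^ 2)) ∂μ)
          ≤ Real.log (Real.exp (-D ^ 2 / (2 * σ ^ 2))) := Real.log_le_log (hIpos σ) hub
        _ = -D ^ 2 / (2 * σ ^ 2) := Real.log_exp _
    unfold smDist2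
    have hσ2 : (0:ℝ) < σ ^ 2 := by positivity
    have h2 : 2 * σ ^ 2 * (-D ^ 2 / (2 * σ ^ 2)) = -D ^ 2 := by field_simp
    have h3 := mul_le_mul_of_nonneg_left hlog (by positivity : (0:ℝ) ≤ 2 * σ ^ 2)
    rw [h2] at h3
    linarith
  · -- upper bound
    intro a ha
    have ha0 : 0 < a := lt_of_le_of_lt (by positivity) ha
    have hDa : D < Real.sqrt a := by
      nlinarith [Real.sq_sqrt ha0.le, Real.sqrt_nonneg a, sq_nonneg (D - Real.sqrt a)]
    set r : ℝ := (D + Real.sqrt a) / 2 with hr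
    have hrD : D < r := by simp only [hr]; linarith
    have hr0 : 0 ≤ r := by simp only [hr]; linarith [Real.sqrt_nonneg a]
    have hr2a : r ^ 2 < a := by
      nlinarith [Real.sq_sqrt ha0.le, Real.sqrt_nonneg a]
    obtain ⟨y₀, hy₀K, hy₀⟩ := (Metric.infDist_lt_iff hKne).1 hrD
    set δ : ℝ := r - dist x y₀ with hδdef
    have hδ : 0 < δ := by simp only [hδdef]; linarith
    set c : ℝ := (μ (Metric.ball y₀ δ)).toReal with hc
    have hcpos : 0 < c := by
      have h1 : 0 < μ (Metric.ball y₀ δ) := hy₀K _ (Metric.ball_mem_nhds _ hδ)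
      have h2 : μ (Metric.ball y₀ δ) ≠ ⊤ := measure_ne_top μ _
      exact ENNReal.toReal_pos h1.ne' h2
    -- key bound for σ > 0 : smDist2 μ x σ ≤ -2σ² log c + r²
    have key : ∀ σ : ℝ, 0 < σ → smDist2 μ x σ ≤ -2 * σ ^ 2 * Real.log c + r ^ 2 := by
      intro σ hσ0
      have hσ2 : (0:ℝ) < σ ^ 2 := by positivity
      have hball : c * Real.exp (-r ^ 2 / (2 * σ ^ 2)) ≤
          ∫ y, Real.exp (-‖y - x‖ ^ 2 / (2 * σ ^ 2)) ∂μ := by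
        have h1 : c * Real.exp (-r ^ 2 / (2 * σ ^ 2)) ≤
            ∫ y in Metric.ball y₀ δ, Real.exp (-‖y - x‖ ^ 2 / (2 * σ ^ 2)) ∂μ := by
          rw [mul_comm]
          apply setIntegral_ge_of_const_le_real Metric.isOpen_ball.measurableSet
            (measure_ne_top μ _)
          · intro y hy
            apply Real.exp_le_exp.2
            apply div_le_div_of_nonneg_right ?_ (by positivity)
            have h2 : ‖y - x‖ < r := by
              rw [show ‖y - x‖ = dist x y by rw [dist_comm, dist_eq_norm]]
              calc dist x y ≤ dist x y₀ + dist y₀ y := dist_triangle _ _ _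
                _ < dist x y₀ + δ := by
                    have := Metric.mem_ball'.1 hy; linarith
                _ = r := by simp [hδdef]
            have h3 : 0 ≤ ‖y - x‖ := norm_nonneg _
            nlinarith
          · exact (hint σ).integrableOn
        refine le_trans h1 (setIntegral_le_integral (hint σ) ?_)
        filter_upwards with y using (Real.exp_pos _).le
      have hlog : Real.log c + (-r ^ 2 / (2 * σ ^ 2)) ≤
          Real.log (∫ y, Real.exp (-‖y - x‖ ^ 2 / (2 * σ ^ 2)) ∂μ) := by
        calc Real.log c + (-r ^ 2 / (2 * σ ^ 2))
            = Real.log (c * Real.exp (-r ^ 2 / (2 * σ ^ 2))) := by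
              rw [Real.log_mul hcpos.ne' (Real.exp_pos _).ne', Real.log_exp]
          _ ≤ _ := Real.log_le_log (by positivity) hball
      unfold smDist2
      have h2 : 2 * σ ^ 2 * (Real.log c + -r ^ 2 / (2 * σ ^ 2)) =
          2 * σ ^ 2 * Real.log c + -r ^ 2 := by field_simp
      have h3 := mul_le_mul_of_nonneg_left hlog (by positivity : (0:ℝ) ≤ 2 * σ ^ 2)
      rw [h2] at h3
      linarith
    have htend : Tendsto (fun σ : ℝ => -2 * σ ^ 2 * Real.log c + r ^ 2)
        (nhdsWithin 0 (Ioi (0:ℝ))) (nhds (r ^ 2)) := by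
      have hc2 : Continuous (fun σ : ℝ => -2 * σ ^ 2 * Real.log c + r ^ 2) := by fun_prop
      have := (hc2.tendsto 0).mono_left (nhdsWithin_le_nhds (s := Ioi (0:ℝ)))
      simpa using this
    have hev : ∀ᶠ σ in nhdsWithin 0 (Ioi (0:ℝ)),
        -2 * σ ^ 2 * Real.log c + r ^ 2 < a :=
      htend.eventually (Filter.Tendsto.eventually_lt_const hr2a tendsto_id)
    filter_upwards [hev, self_mem_nhdsWithin] with σ h1 h2
    exact lt_of_le_of_lt (key σ h2) h1
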